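/- Let T : D(T) → H be a closed operator with dense domain on a quaternionic Hilbert space H. Then D(T*T) is a core for T; that is, the closure of the restriction of T to D(T*T) equals T. -/

import Mathlib

noncomputable section

notation "ℍ" => Quaternion ℝ

open MeasureTheory Filter

/-- Borel σ-algebra on the quaternions. -/
instance : MeasurableSpace ℍ := borel ℍ

instance : BorelSpace ℍ := ⟨rfl⟩

/-- A quaternionic (right) Hilbert space structure on a normed additive group `H`:
a right scalar multiplication by quaternions together with an ℍ-valued Hermitian
scalar product compatible with the norm.  (Completeness of `H` is assumed
separately via `[CompleteSpace H]`.) -/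
structure QHS (H : Type) [NormedAddCommGroup H] where
  smul : H → ℍ → H
  inn : H → H → ℍ
  add_smul' : ∀ (u v : H) (q : ℍ), smul (u + v) q = smul u q + smul v q
  smul_add' : ∀ (u : H) (p q : ℍ), smul u (p + q) = smul u p + smul u q
  smul_mul' : ∀ (u : H) (p q : ℍ), smul u (p * q) = smul (smul u p) q
  smul_one' : ∀ u : H, smul u 1 = u
  inn_add_right : ∀ u v w : H, inn u (v + w) = inn u v + inn u w
  inn_smul_right : ∀ (u v : H) (q : ℍ), inn u (smul v q) = inn u v * q
  inn_conj : ∀ u v : H, inn u v = star (inn v u)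
  inn_self_real : ∀ u : H, inn u u = (((inn u u).re : ℝ) : ℍ)
  norm_sq' : ∀ u : H, ‖u‖ ^ 2 = (inn u u).re

variable {H : Type} [NormedAddCommGroup H]

/-- The graph of an operator `T` with domain `D`. -/
def graphOf (T : H → H) (D : Set H) : Set (H × H) := {p | p.1 ∈ D ∧ p.2 = T p.1}

/-- Domain of a graph. -/
def graphDom (G : Set (H × H)) : Set H := {u | ∃ w, (u, w) ∈ G}

/-- A function extracted from a graph (by choice). -/
def graphFun (G : Set (H × H)) : H → H := fun u =>
  letI : Nonempty H := ⟨0⟩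
  Classical.epsilon fun w => (u, w) ∈ G

/-- Boundedness of an everywhere defined operator. -/
def BoundedOp (T : H → H) : Prop := ∃ C : ℝ, ∀ u : H, ‖T u‖ ≤ C * ‖u‖

/-- The operator norm. -/
def opNorm (T : H → H) : ℝ := sInf {C : ℝ | 0 ≤ C ∧ ∀ u : H, ‖T u‖ ≤ C * ‖u‖}

/-- Closed operator: the graph is closed. -/
def ClosedOp (T : H → H) (D : Set H) : Prop := IsClosed (graphOf T D)

/-- The domain `D(T²)`. -/
def D2 (T : H → H) (D : Set H) : Set H := {u ∈ D | T u ∈ D}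

/-- The slice complex plane `ℂ_ι = {a + ι b}` determined by an imaginary unit `ι`. -/
def Cslice (ι : ℍ) : Set ℍ :=
  {x : ℍ | ∃ a b : ℝ, x = ((a : ℝ) : ℍ) + ι * ((b : ℝ) : ℍ)}

/-- The closed upper half slice plane `ℂ_ι⁺ = {a + ι b : b ≥ 0}`. -/
def Cplus (ι : ℍ) : Set ℍ :=
  {x : ℍ | ∃ a b : ℝ, 0 ≤ b ∧ x = ((a : ℝ) : ℍ) + ι * ((b : ℝ) : ℍ)}

namespace QHS

variable (𝒮 : QHS H)

/-- Right ℍ-linearity of an everywhere defined map. -/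
def RightLinear (T : H → H) : Prop :=
  (∀ u v : H, T (u + v) = T u + T v) ∧ ∀ (u : H) (q : ℍ), T (𝒮.smul u q) = 𝒮.smul (T u) q

/-- A (right ℍ-linear) subspace. -/
def IsSubspace (D : Set H) : Prop :=
  (0 : H) ∈ D ∧ (∀ u ∈ D, ∀ v ∈ D, u + v ∈ D) ∧ ∀ u ∈ D, ∀ q : ℍ, 𝒮.smul u q ∈ D

/-- Right ℍ-linearity on a domain `D`. -/
def RightLinearOn (T : H → H) (D : Set H) : Prop :=
  (∀ u ∈ D, ∀ v ∈ D, T (u + v) = T u + T v) ∧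
    ∀ u ∈ D, ∀ q : ℍ, T (𝒮.smul u q) = 𝒮.smul (T u) q

/-- `S` is the adjoint of `T` (both everywhere defined):  `⟨S u|v⟩ = ⟨u|T v⟩`. -/
def AdjointPair (T S : H → H) : Prop := ∀ u v : H, 𝒮.inn (S u) v = 𝒮.inn u (T v)

def SelfAdjointOp (T : H → H) : Prop := ∀ u v : H, 𝒮.inn (T u) v = 𝒮.inn u (T v)

def AntiSelfAdjointOp (T : H → H) : Prop := ∀ u v : H, 𝒮.inn (T u) v = -𝒮.inn u (T v)

/-- Positivity: `⟨u|T u⟩` is real and non-negative. -/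
def PositiveOp (T : H → H) : Prop :=
  ∀ u : H, 𝒮.inn u (T u) = ((((𝒮.inn u (T u)).re : ℝ)) : ℍ) ∧ 0 ≤ (𝒮.inn u (T u)).re

/-- Positivity on a domain. -/
def PositiveOn (T : H → H) (D : Set H) : Prop :=
  ∀ u ∈ D, 𝒮.inn u (T u) = ((((𝒮.inn u (T u)).re : ℝ)) : ℍ) ∧ 0 ≤ (𝒮.inn u (T u)).re

/-- Unitarity: right linear, surjective, inner-product preserving. -/
def UnitaryOp (T : H → H) : Prop :=
  𝒮.RightLinear T ∧ Function.Surjective T ∧ ∀ u v : H, 𝒮.inn (T u) (T v) = 𝒮.inn u v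

/-- The domain of the adjoint of `T : D → H`. -/
def adjDom (T : H → H) (D : Set H) : Set H :=
  {u : H | ∃ w : H, ∀ v ∈ D, 𝒮.inn w v = 𝒮.inn u (T v)}

/-- The adjoint operator of `T : D → H` (defined by choice; it is the genuine
adjoint when `D` is dense). -/
def adjOp (T : H → H) (D : Set H) : H → H := fun u =>
  letI := Classical.propDecidable
  if h : ∃ w : H, ∀ v ∈ D, 𝒮.inn w v = 𝒮.inn u (T v) then h.choose else 0

/-- Self-adjointness of an unbounded operator: `T* = T` (same domain, same values). -/
def SelfAdjointUnb (T : H → H) (D : Set H) : Prop :=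
  𝒮.adjDom T D = D ∧ ∀ u ∈ D, 𝒮.adjOp T D u = T u

/-- Normality of an unbounded operator: `T T* = T* T`. -/
def NormalUnb (T : H → H) (D : Set H) : Prop :=
  ({u ∈ D | T u ∈ 𝒮.adjDom T D} = {u ∈ 𝒮.adjDom T D | 𝒮.adjOp T D u ∈ D}) ∧
    ∀ u ∈ D, T u ∈ 𝒮.adjDom T D → 𝒮.adjOp T D (T u) = T (𝒮.adjOp T D u)

/-- The positive square root of a positive bounded operator (by choice). -/
def posSqrt (T : H → H) : H → H :=
  letI : Nonempty (H → H) := ⟨id⟩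
  Classical.epsilon fun R : H → H =>
    𝒮.RightLinear R ∧ BoundedOp R ∧ 𝒮.PositiveOp R ∧ 𝒮.SelfAdjointOp R ∧
      ∀ u : H, R (R u) = T u

/-- The operator `Δ_q(T) = T² - T (2 Re q) + |q|² 1`. -/
def Delta (T : H → H) (q : ℍ) : H → H := fun u =>
  T (T u) - 𝒮.smul (T u) (((2 * q.re : ℝ)) : ℍ) + 𝒮.smul u (((‖q‖ ^ 2 : ℝ)) : ℍ)

/-- Membership in the spherical resolvent set: `Δ_q(T)` is injective with dense range
and bounded inverse. -/
def InSphResolvent (T : H → H) (D : Set H) (q : ℍ) : Prop :=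
  (∀ u ∈ D2 T D, 𝒮.Delta T q u = 0 → u = 0) ∧
    Dense (𝒮.Delta T q '' D2 T D) ∧
    ∃ C : ℝ, ∀ u ∈ D2 T D, ‖u‖ ≤ C * ‖𝒮.Delta T q u‖

/-- The spherical spectrum. -/
def sphSpectrum (T : H → H) (D : Set H) : Set ℍ := {q | ¬𝒮.InSphResolvent T D q}

/-- The spherical point spectrum. -/
def sphPointSpectrum (T : H → H) (D : Set H) : Set ℍ :=
  {q | ∃ u ∈ D2 T D, u ≠ 0 ∧ 𝒮.Delta T q u = 0}

/-- The spherical residual spectrum. -/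
def sphResidualSpectrum (T : H → H) (D : Set H) : Set ℍ :=
  {q | (∀ u ∈ D2 T D, 𝒮.Delta T q u = 0 → u = 0) ∧
    ¬Dense (𝒮.Delta T q '' D2 T D)}

/-- The spherical continuous spectrum. -/
def sphContinuousSpectrum (T : H → H) (D : Set H) : Set ℍ :=
  {q | (∀ u ∈ D2 T D, 𝒮.Delta T q u = 0 → u = 0) ∧
    Dense (𝒮.Delta T q '' D2 T D) ∧
    ¬∃ C : ℝ, ∀ u ∈ D2 T D, ‖u‖ ≤ C * ‖𝒮.Delta T q u‖}

/-- A Hilbert basis of a quaternionic Hilbert space. -/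
def IsHilbertBasis (N : Set H) : Prop :=
  (∀ z ∈ N, ‖z‖ = 1) ∧ (∀ z ∈ N, ∀ w ∈ N, z ≠ w → 𝒮.inn z w = 0) ∧
    ∀ u : H, (∀ z ∈ N, 𝒮.inn z u = 0) → u = 0

/-- `L` is the left scalar multiplication induced by the Hilbert basis `N`:
`L_q u = Σ_{z ∈ N} z q ⟨z|u⟩`. -/
def IsInducedLSM (N : Set H) (L : ℍ → H → H) : Prop :=
  ∀ (q : ℍ) (u : H),
    HasSum (fun z : N => 𝒮.smul (z : H) (q * 𝒮.inn (z : H) u)) (L q u)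

/-- `L` is a left scalar multiplication of `H` (induced by some Hilbert basis). -/
def IsLSM (L : ℍ → H → H) : Prop :=
  ∃ N : Set H, 𝒮.IsHilbertBasis N ∧ 𝒮.IsInducedLSM N L

/-- The orthogonal complement of a subset. -/
def orthC (S : Set H) : Set H := {u : H | ∀ v ∈ S, 𝒮.inn u v = 0}

/-- The complex subspace `H₊^{Jι} = {u : J u = u ι}`. -/
def Hplus (J : H → H) (ι : ℍ) : Set H := {u : H | J u = 𝒮.smul u ι}

/-- The complex subspace `H₋^{Jι} = {u : J u = -u ι}`. -/
def Hminus (J : H → H) (ι : ℍ) : Set H := {u : H | J u = -𝒮.smul u ι}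

end QHS

/-- A quaternionic projection valued measure (qPVM) over `ℂ_ι⁺` in `H`. -/
structure IsQPVM (𝒮 : QHS H) (ι : ℍ) (P : Set ℍ → H → H) : Prop where
  proj_linear : ∀ E : Set ℍ, MeasurableSet E → E ⊆ Cplus ι → 𝒮.RightLinear (P E)
  proj_bounded : ∀ E : Set ℍ, MeasurableSet E → E ⊆ Cplus ι → BoundedOp (P E)
  proj_idem : ∀ E : Set ℍ, MeasurableSet E → E ⊆ Cplus ι → ∀ u, P E (P E u) = P E u
  proj_sa : ∀ E : Set ℍ, MeasurableSet E → E ⊆ Cplus ι → 𝒮.SelfAdjointOp (P E)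
  proj_pos : ∀ E : Set ℍ, MeasurableSet E → E ⊆ Cplus ι → 𝒮.PositiveOp (P E)
  total : ∀ u : H, P (Cplus ι) u = u
  inter : ∀ E F : Set ℍ, MeasurableSet E → E ⊆ Cplus ι → MeasurableSet F → F ⊆ Cplus ι →
    ∀ u, P (E ∩ F) u = P E (P F u)
  sigma_add : ∀ E : ℕ → Set ℍ, (∀ n, MeasurableSet (E n) ∧ E n ⊆ Cplus ι) →
    (Pairwise fun n m => Disjoint (E n) (E m)) →
    ∀ u : H, HasSum (fun n => P (E n) u) (P (⋃ n, E n) u)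

/-- The support of a qPVM: points of `ℂ_ι⁺` all of whose relatively open neighbourhoods
have non-zero projection. -/
def suppP (ι : ℍ) (P : Set ℍ → H → H) : Set ℍ :=
  {x ∈ Cplus ι | ∀ U : Set ℍ, IsOpen U → x ∈ U → ∃ u : H, P (U ∩ Cplus ι) u ≠ 0}

/-- An intertwining quaternionic PVM (iqPVM): a qPVM together with a commuting left
scalar multiplication. -/
def IsIQPVM (𝒮 : QHS H) (ι : ℍ) (P : Set ℍ → H → H) (L : ℍ → H → H) : Prop :=
  IsQPVM 𝒮 ι P ∧ 𝒮.IsLSM L ∧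
    ∀ E : Set ℍ, MeasurableSet E → E ⊆ Cplus ι →
      ∀ (q : ℍ) (u : H), P E (L q u) = L q (P E u)

/-- Data of a simple function: coefficients and pairwise disjoint Borel subsets of `ℂ_ι⁺`. -/
def IsSimpleData (ι : ℍ) {n : ℕ} (c : Fin n → ℍ) (E : Fin n → Set ℍ) : Prop :=
  (∀ ℓ, MeasurableSet (E ℓ) ∧ E ℓ ⊆ Cplus ι) ∧
    Pairwise fun ℓ ℓ' => Disjoint (E ℓ) (E ℓ')

/-- `S = ∫ φ d𝒫`, characterized by uniform approximation (on the support of `P`)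
by simple functions together with approximation of `S` by the corresponding
elementary integrals `Σ_ℓ L_{c_ℓ} P(E_ℓ)`. -/
def IsBoundedIntegral (𝒮 : QHS H) (ι : ℍ) (P : Set ℍ → H → H) (L : ℍ → H → H)
    (φ : ℍ → ℍ) (S : H → H) : Prop :=
  ∀ ε : ℝ, 0 < ε → ∃ (n : ℕ) (c : Fin n → ℍ) (E : Fin n → Set ℍ),
    IsSimpleData ι c E ∧
    (∀ x ∈ suppP ι P, ‖φ x - ∑ ℓ, Set.indicator (E ℓ) (fun _ => c ℓ) x‖ ≤ ε) ∧
    ∀ u : H, ‖S u - ∑ ℓ, L (c ℓ) (P (E ℓ) u)‖ ≤ ε * ‖u‖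

/-- The integral of a bounded measurable function with respect to an iqPVM
(defined by choice from the characterizing property). -/
def bInt (𝒮 : QHS H) (ι : ℍ) (P : Set ℍ → H → H) (L : ℍ → H → H) (φ : ℍ → ℍ) : H → H :=
  letI : Nonempty (H → H) := ⟨id⟩
  Classical.epsilon fun S : H → H => IsBoundedIntegral 𝒮 ι P L φ S

/-- The `P`-essential supremum norm `‖φ‖_∞^{(P)}`. -/
def essSupNorm (ι : ℍ) (P : Set ℍ → H → H) (φ : ℍ → ℍ) : ℝ :=
  sInf {k : ℝ | 0 ≤ k ∧ ∀ u : H, P {x ∈ Cplus ι | k < ‖φ x‖} u = 0}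

/-- `μ` is the positive Borel measure `μ_u^{(P)} : E ↦ ⟨u|P(E)u⟩`. -/
def muMatches (𝒮 : QHS H) (ι : ℍ) (P : Set ℍ → H → H) (u : H) (μ : Measure ℍ) : Prop :=
  ∀ E : Set ℍ, MeasurableSet E →
    μ E = ENNReal.ofReal ((𝒮.inn u (P (E ∩ Cplus ι) u)).re)

/-- The natural domain `D_f = {u : f ∈ L²(μ_u^{(P)})}` of `∫ f d𝒫`. -/
def Dnat (𝒮 : QHS H) (ι : ℍ) (P : Set ℍ → H → H) (f : ℍ → ℍ) : Set H :=
  {u : H | ∃ μ : Measure ℍ, muMatches 𝒮 ι P u μ ∧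
    (∫⁻ x, ENNReal.ofReal (‖f x‖ ^ 2) ∂μ) < ⊤}

/-- The truncation of `f` at level `n`. -/
def trunc (f : ℍ → ℍ) (n : ℕ) : ℍ → ℍ := fun x => if ‖f x‖ ≤ (n : ℝ) then f x else 0

/-- The integral of a possibly unbounded measurable function with respect to an iqPVM:
the strong limit of the integrals of its truncations. -/
def uInt (𝒮 : QHS H) (ι : ℍ) (P : Set ℍ → H → H) (L : ℍ → H → H) (f : ℍ → ℍ) : H → H :=
  fun u =>
    letI : Nonempty H := ⟨0⟩
    limUnder atTop fun n : ℕ => bInt 𝒮 ι P L (trunc f n) u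

/-- The inverse `(1 + T*T)⁻¹` of `1 + T*T` (by choice). -/
def CT (𝒮 : QHS H) (T : H → H) (D : Set H) : H → H :=
  letI : Nonempty (H → H) := ⟨id⟩
  Classical.epsilon fun C : H → H =>
    (∀ y : H, C y ∈ D ∧ T (C y) ∈ 𝒮.adjDom T D ∧ C y + 𝒮.adjOp T D (T (C y)) = y) ∧
      ∀ u ∈ D, T u ∈ 𝒮.adjDom T D → C (u + 𝒮.adjOp T D (T u)) = u

/-- The bounded transform `Z_T = T (1 + T*T)^{-1/2}`. -/
def ZT (𝒮 : QHS H) (T : H → H) (D : Set H) : H → H := fun u =>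
  T (𝒮.posSqrt (CT 𝒮 T D) u)

end

/-! Restricting scalars to `ℝ ⊂ ℍ` and taking `Re ⟨·|·⟩` turns `H` into a real Hilbert space, in
which the graph `G` of `T` is a closed subspace. Projecting `(y, 0)` onto `G` solves
`v + T*T v = y` weakly with `v ∈ D(T*T)`. If `(x, T x) ∈ G` is orthogonal to the graph of `T` over
`D(T*T)`, choose such a `v` for `y = x`: then `‖x‖² = Re ⟨x|v⟩ + Re ⟨T v|T x⟩ = 0`. Hence that graph
is dense in `G`. -/

lemma Quaternion.eq_zero_of_forall_re_mul_eq_zero {x : ℍ} (h : ∀ q : ℍ, (x * q).re = 0) :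
    x = 0 := by
  have hx := h (star x)
  rwa [Quaternion.self_mul_star, Quaternion.re_coe, Quaternion.normSq_eq_zero] at hx

lemma Submodule.topologicalClosure_eq_of_forall_mem_orthogonal {𝕜 E : Type*} [RCLike 𝕜]
    [NormedAddCommGroup E] [InnerProductSpace 𝕜 E] [CompleteSpace E] {M G : Submodule 𝕜 E}
    (hMG : M ≤ G) (hG : IsClosed (G : Set E)) (h : ∀ z ∈ G, z ∈ Mᗮ → z = 0) :
    M.topologicalClosure = G := by
  refine le_antisymm (M.topologicalClosure_minimal hMG hG) fun p hp => ?_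
  obtain ⟨m, hm, z, hz, rfl⟩ := M.topologicalClosure.exists_add_mem_mem_orthogonal p
  have hzG : z ∈ G := by
    simpa using G.sub_mem hp (M.topologicalClosure_minimal hMG hG hm)
  rw [h z hzG (M.orthogonal_closure ▸ hz), add_zero]
  exact hm

namespace QHS

variable {H : Type} [NormedAddCommGroup H] (𝒮 : QHS H)

lemma inn_add_left (u v w : H) : 𝒮.inn (u + v) w = 𝒮.inn u w + 𝒮.inn v w := by
  rw [𝒮.inn_conj, 𝒮.inn_add_right, star_add, ← 𝒮.inn_conj, ← 𝒮.inn_conj]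

lemma inn_smul_left (u v : H) (q : ℍ) : 𝒮.inn (𝒮.smul u q) v = star q * 𝒮.inn u v := by
  rw [𝒮.inn_conj, 𝒮.inn_smul_right, star_mul, ← 𝒮.inn_conj]

lemma inn_zero_left (v : H) : 𝒮.inn 0 v = 0 := by
  simpa using 𝒮.inn_add_left 0 0 v

lemma inn_neg_left (u v : H) : 𝒮.inn (-u) v = -𝒮.inn u v := by
  rw [eq_neg_iff_add_eq_zero, ← inn_add_left, neg_add_cancel, inn_zero_left]

lemma re_inn_comm (u v : H) : (𝒮.inn u v).re = (𝒮.inn v u).re := by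
  rw [𝒮.inn_conj u v, Quaternion.re_star]

lemma smul_zero_left (q : ℍ) : 𝒮.smul 0 q = 0 := by
  simpa using 𝒮.add_smul' 0 0 q

lemma smul_zero_right (u : H) : 𝒮.smul u 0 = 0 := by
  simpa using 𝒮.smul_add' u 0 0

lemma norm_smul (u : H) (q : ℍ) : ‖𝒮.smul u q‖ = ‖q‖ * ‖u‖ := by
  have hsq : ‖𝒮.smul u q‖ ^ 2 = (‖q‖ * ‖u‖) ^ 2 := by
    have hu := 𝒮.inn_self_real u
    rw [← 𝒮.norm_sq'] at hu
    rw [𝒮.norm_sq', 𝒮.inn_smul_right, 𝒮.inn_smul_left, hu, mul_assoc, Quaternion.coe_commutes,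
      ← mul_assoc, Quaternion.star_mul_self, ← Quaternion.coe_mul, Quaternion.re_coe,
      Quaternion.normSq_eq_norm_mul_self]
    ring
  exact (pow_left_inj₀ (norm_nonneg _) (by positivity) two_ne_zero).1 hsq

/-- `H` as a real inner product space: `r • u = u r` for `r ∈ ℝ ⊂ ℍ`, and `⟪u, v⟫ = Re ⟨u|v⟩`. -/
def RealSpace (_𝒮 : QHS H) : Type := H

namespace RealSpace

instance : NormedAddCommGroup 𝒮.RealSpace := inferInstanceAs (NormedAddCommGroup H)

instance [CompleteSpace H] : CompleteSpace 𝒮.RealSpace := inferInstanceAs (CompleteSpace H)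

instance : SMul ℝ 𝒮.RealSpace := ⟨fun r u => 𝒮.smul u (r : ℍ)⟩

lemma smul_def (r : ℝ) (u : 𝒮.RealSpace) : r • u = 𝒮.smul u (r : ℍ) := rfl

instance : Module ℝ 𝒮.RealSpace where
  one_smul u := by rw [smul_def, Quaternion.coe_one]; exact 𝒮.smul_one' u
  mul_smul r s u := by
    rw [smul_def, smul_def, smul_def, mul_comm r s, Quaternion.coe_mul]
    exact 𝒮.smul_mul' u _ _
  smul_zero r := 𝒮.smul_zero_left _
  smul_add r u v := 𝒮.add_smul' u v _
  add_smul r s u := by rw [smul_def, Quaternion.coe_add]; exact 𝒮.smul_add' u _ _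
  zero_smul u := by rw [smul_def, Quaternion.coe_zero]; exact 𝒮.smul_zero_right u

instance : NormedSpace ℝ 𝒮.RealSpace where
  norm_smul_le r u := by
    rw [smul_def]
    exact (𝒮.norm_smul u r).trans_le (by rw [Quaternion.norm_coe]; rfl)

instance : Inner ℝ 𝒮.RealSpace := ⟨fun u v => (𝒮.inn u v).re⟩

lemma inner_def (u v : 𝒮.RealSpace) : inner ℝ u v = (𝒮.inn u v).re := rfl

instance : InnerProductSpace ℝ 𝒮.RealSpace where
  norm_sq_eq_re_inner u := 𝒮.norm_sq' u
  conj_inner_symm u v := 𝒮.re_inn_comm v u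
  add_left u v w := by
    simp only [inner_def]
    exact congrArg QuaternionAlgebra.re (𝒮.inn_add_left u v w)
  smul_left u v r := by
    have h := congrArg QuaternionAlgebra.re (𝒮.inn_smul_left (u : H) v r)
    rw [Quaternion.star_coe, Quaternion.coe_mul_eq_smul, Quaternion.re_smul] at h
    rw [conj_trivial]
    exact h

end RealSpace

end QHS

namespace QHS

variable {H : Type} [NormedAddCommGroup H] {𝒮 : QHS H} {T : H → H} {D : Set H}

lemma RightLinearOn.map_zero (hD : 𝒮.IsSubspace D) (hlin : 𝒮.RightLinearOn T D) : T 0 = 0 := by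
  simpa using hlin.1 0 hD.1 0 hD.1

lemma RightLinearOn.mono {D' : Set H} (hlin : 𝒮.RightLinearOn T D) (hD' : D' ⊆ D) :
    𝒮.RightLinearOn T D' :=
  ⟨fun u hu v hv => hlin.1 u (hD' hu) v (hD' hv), fun u hu => hlin.2 u (hD' hu)⟩

variable (𝒮 T D) in
lemma isSubspace_adjDom : 𝒮.IsSubspace (𝒮.adjDom T D) := by
  refine ⟨⟨0, fun v _ => by rw [𝒮.inn_zero_left, 𝒮.inn_zero_left]⟩, ?_, ?_⟩
  · rintro x ⟨a, ha⟩ y ⟨b, hb⟩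
    exact ⟨a + b, fun v hv => by rw [𝒮.inn_add_left, 𝒮.inn_add_left, ha v hv, hb v hv]⟩
  · rintro x ⟨a, ha⟩ q
    exact ⟨𝒮.smul a q, fun v hv => by rw [𝒮.inn_smul_left, 𝒮.inn_smul_left, ha v hv]⟩

lemma IsSubspace.sep_preimage {D' : Set H} (hD : 𝒮.IsSubspace D) (hlin : 𝒮.RightLinearOn T D)
    (hD' : 𝒮.IsSubspace D') : 𝒮.IsSubspace {u ∈ D | T u ∈ D'} := by
  refine ⟨⟨hD.1, show T 0 ∈ D' by rw [hlin.map_zero hD]; exact hD'.1⟩, ?_, ?_⟩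
  · rintro u ⟨hu, hTu⟩ v ⟨hv, hTv⟩
    exact ⟨hD.2.1 u hu v hv, hlin.1 u hu v hv ▸ hD'.2.1 _ hTu _ hTv⟩
  · rintro u ⟨hu, hTu⟩ q
    exact ⟨hD.2.2 u hu q, hlin.2 u hu q ▸ hD'.2.2 _ hTu q⟩

variable (𝒮) in
def graphSubmodule (hD : 𝒮.IsSubspace D) (hlin : 𝒮.RightLinearOn T D) :
    Submodule ℝ (WithLp 2 (𝒮.RealSpace × 𝒮.RealSpace)) where
  carrier := WithLp.ofLp ⁻¹' graphOf T D
  add_mem' := by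
    rintro x y ⟨hx, hTx⟩ ⟨hy, hTy⟩
    exact ⟨hD.2.1 _ hx _ hy, (congrArg₂ (· + ·) hTx hTy).trans (hlin.1 _ hx _ hy).symm⟩
  zero_mem' := ⟨hD.1, (hlin.map_zero hD).symm⟩
  smul_mem' := by
    rintro r x ⟨hx, hTx⟩
    exact ⟨hD.2.2 _ hx _, (congrArg (𝒮.smul · _) hTx).trans (hlin.2 _ hx _).symm⟩

lemma isClosed_graphSubmodule (hD : 𝒮.IsSubspace D) (hlin : 𝒮.RightLinearOn T D)
    (hclosed : ClosedOp T D) :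
    IsClosed (graphSubmodule 𝒮 hD hlin : Set (WithLp 2 (𝒮.RealSpace × 𝒮.RealSpace))) :=
  hclosed.preimage (WithLp.prod_continuous_ofLp 2 _ _)

/-- Orthogonality to the graph is a real condition, but testing it against `(v q, T (v q))` for
all `q ∈ ℍ` upgrades it to the quaternionic identity. -/
lemma inn_add_inn_eq_zero_of_mem_orthogonal (hD : 𝒮.IsSubspace D)
    (hlin : 𝒮.RightLinearOn T D) {x y : H}
    (hxy : WithLp.toLp 2 ((x, y) : 𝒮.RealSpace × 𝒮.RealSpace) ∈ (graphSubmodule 𝒮 hD hlin)ᗮ)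
    {v : H} (hv : v ∈ D) : 𝒮.inn x v + 𝒮.inn y (T v) = 0 := by
  refine Quaternion.eq_zero_of_forall_re_mul_eq_zero fun q => ?_
  have hvq : WithLp.toLp 2 ((𝒮.smul v q, T (𝒮.smul v q)) : 𝒮.RealSpace × 𝒮.RealSpace) ∈
      graphSubmodule 𝒮 hD hlin :=
    ⟨hD.2.2 v hv q, rfl⟩
  have h : (𝒮.inn x (𝒮.smul v q)).re + (𝒮.inn y (T (𝒮.smul v q))).re = 0 :=
    (Submodule.mem_orthogonal' _ _).1 hxy _ hvq
  rwa [hlin.2 v hv, 𝒮.inn_smul_right, 𝒮.inn_smul_right, ← Quaternion.re_add, ← add_mul] at h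

variable [CompleteSpace H]

/-- `1 + T*T` is onto: projecting `(y, 0)` onto the graph of `T` gives `y = v + a` with
`a = T*T v` weakly. -/
lemma exists_mem_add_adjoint_eq (hD : 𝒮.IsSubspace D) (hlin : 𝒮.RightLinearOn T D)
    (hclosed : ClosedOp T D) (y : H) :
    ∃ v ∈ D, ∃ a : H, (∀ w ∈ D, 𝒮.inn a w = 𝒮.inn (T v) (T w)) ∧ v + a = y := by
  have : CompleteSpace (graphSubmodule 𝒮 hD hlin) :=
    (isClosed_graphSubmodule hD hlin hclosed).completeSpace_coe
  obtain ⟨g, hg, z, hz, hyz⟩ := (graphSubmodule 𝒮 hD hlin).exists_add_mem_mem_orthogonal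
    (WithLp.toLp 2 ((y, 0) : 𝒮.RealSpace × 𝒮.RealSpace))
  obtain ⟨v, v', rfl⟩ : ∃ v v' : H, g = WithLp.toLp 2 ((v, v') : 𝒮.RealSpace × 𝒮.RealSpace) :=
    ⟨_, _, rfl⟩
  obtain ⟨a, b, rfl⟩ : ∃ a b : H, z = WithLp.toLp 2 ((a, b) : 𝒮.RealSpace × 𝒮.RealSpace) :=
    ⟨_, _, rfl⟩
  obtain ⟨hv, rfl⟩ : v ∈ D ∧ v' = T v := hg
  have hb : b = -T v := eq_neg_of_add_eq_zero_right (congrArg (fun p => p.ofLp.2) hyz).symm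
  refine ⟨v, hv, a, fun w hw => ?_, (congrArg (fun p => p.ofLp.1) hyz).symm⟩
  have h := inn_add_inn_eq_zero_of_mem_orthogonal hD hlin hz hw
  rwa [hb, 𝒮.inn_neg_left, ← sub_eq_add_neg, sub_eq_zero] at h

lemma eq_zero_of_mem_graphSubmodule_of_mem_orthogonal (hD : 𝒮.IsSubspace D)
    (hlin : 𝒮.RightLinearOn T D) (hclosed : ClosedOp T D)
    {z : WithLp 2 (𝒮.RealSpace × 𝒮.RealSpace)} (hzG : z ∈ graphSubmodule 𝒮 hD hlin)
    (hzM : z ∈ (graphSubmodule 𝒮 (hD.sep_preimage hlin (𝒮.isSubspace_adjDom T D))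
      (hlin.mono (Set.sep_subset D _)))ᗮ) :
    z = 0 := by
  obtain ⟨x, x', rfl⟩ : ∃ x x' : H, z = WithLp.toLp 2 ((x, x') : 𝒮.RealSpace × 𝒮.RealSpace) :=
    ⟨_, _, rfl⟩
  obtain ⟨hx, rfl⟩ : x ∈ D ∧ x' = T x := hzG
  obtain ⟨v, hv, a, ha, rfl⟩ := exists_mem_add_adjoint_eq hD hlin hclosed x
  have horth := inn_add_inn_eq_zero_of_mem_orthogonal _ _ hzM (v := v) ⟨hv, a, ha⟩
  have hx₀ : ‖v + a‖ ^ 2 = 0 := by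
    calc ‖v + a‖ ^ 2 = (𝒮.inn (v + a) v).re + (𝒮.inn a (v + a)).re := by
          rw [𝒮.norm_sq', 𝒮.inn_add_right, Quaternion.re_add, 𝒮.re_inn_comm a]
      _ = (𝒮.inn (v + a) v + 𝒮.inn (T (v + a)) (T v)).re := by
        rw [ha _ hx, Quaternion.re_add, 𝒮.re_inn_comm (T v)]
      _ = 0 := by rw [horth, Quaternion.re_zero]
  rw [pow_eq_zero_iff two_ne_zero, norm_eq_zero] at hx₀
  simp only [hx₀, hlin.map_zero hD]
  rfl

end QHS

theorem domain_of_TstarT_is_core_general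
    {H : Type} [NormedAddCommGroup H] [CompleteSpace H] (𝒮 : QHS H)
    (T : H → H) (D : Set H)
    (hD : 𝒮.IsSubspace D) (hlin : 𝒮.RightLinearOn T D)
    (hclosed : ClosedOp T D) :
    closure (graphOf T {u ∈ D | T u ∈ 𝒮.adjDom T D}) = graphOf T D := by
  have hD₀ := hD.sep_preimage hlin (𝒮.isSubspace_adjDom T D)
  have hlin₀ : 𝒮.RightLinearOn T {u ∈ D | T u ∈ 𝒮.adjDom T D} := hlin.mono (Set.sep_subset D _)
  have hdense : (𝒮.graphSubmodule hD₀ hlin₀).topologicalClosure = 𝒮.graphSubmodule hD hlin :=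
    Submodule.topologicalClosure_eq_of_forall_mem_orthogonal (fun _ hx => ⟨hx.1.1, hx.2⟩)
      (QHS.isClosed_graphSubmodule hD hlin hclosed)
      fun _ => QHS.eq_zero_of_mem_graphSubmodule_of_mem_orthogonal hD hlin hclosed
  let e := WithLp.homeomorphProd 2 𝒮.RealSpace 𝒮.RealSpace
  apply e.surjective.preimage_injective
  exact (e.preimage_closure _).trans (congrArg SetLike.coe hdense)

/-- For a closed densely defined operator `T` on a quaternionic Hilbert
space, `D(T*T)` is a core for `T`: the closure of the graph of `T` restricted to
`D(T*T) = {u ∈ D : T u ∈ D(T*)}` equals the graph of `T`. -/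
theorem domain_of_TstarT_is_core
    {H : Type} [NormedAddCommGroup H] [CompleteSpace H] (𝒮 : QHS H)
    (T : H → H) (D : Set H)
    (hD : 𝒮.IsSubspace D) (hdense : Dense D) (hlin : 𝒮.RightLinearOn T D)
    (hclosed : ClosedOp T D) :
    closure (graphOf T {u ∈ D | T u ∈ 𝒮.adjDom T D}) = graphOf T D :=
  domain_of_TstarT_is_core_general 𝒮 T D hD hlin hclosed
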